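/- Let Γ be a cancellation monoid and R a Γ-graded ring. Then R is graded left semihereditary if and only if R is graded left coherent and every homogeneous left ideal of R is gr-flat. -/

import Mathlib

/-!
A finitely generated homogeneous ideal `I` is the image of a homogeneous surjection from a
graded free module `⨁ k, R(-d k)`. If `I` is gr-projective this surjection splits, so `I` is
projective and hence finitely presented. Every homogeneous ideal is the union of its finitely
generated homogeneous subideals, so over a graded semihereditary ring it is flat, and flat
modules are gr-flat.

Conversely, a gr-flat graded module `M` has `W ⊗ M → R ⊗ M` injective for every homogeneous
ideal `W`, so by the equational criterion a homogeneous relation among homogeneous elements of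
`M` factors through homogeneous elements. An arbitrary relation splits into finitely many
homogeneous relations among the homogeneous components, which are trivialised one after another;
hence gr-flat modules are flat. A finitely presented flat ideal is projective, and the
degree-preserving part of an ungraded lift shows that a projective graded module is
gr-projective.
-/

namespace GradedPaper

open DirectSum

section Defs

variable {Γ : Type} [DecidableEq Γ] [AddCancelMonoid Γ]

section RingDefs

variable {R : Type} [Ring R]

/-- The grading of a module is compatible with the grading of the ring. -/
def SMulClosed (𝒜 : Γ → AddSubgroup R) {M : Type} [AddCommGroup M] [Module R M]
    (ℳ : Γ → AddSubgroup M) : Prop :=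
  ∀ ⦃i j : Γ⦄ ⦃a : R⦄ ⦃m : M⦄, a ∈ 𝒜 i → m ∈ ℳ j → a • m ∈ ℳ (i + j)

/-- The multiplicative condition `R_α R_β ⊆ R_{αβ}` of a graded ring. -/
def MulClosed (𝒜 : Γ → AddSubgroup R) : Prop :=
  ∀ ⦃i j : Γ⦄ ⦃a b : R⦄, a ∈ 𝒜 i → b ∈ 𝒜 j → a * b ∈ 𝒜 (i + j)

/-- A homogeneous (degree-preserving) homomorphism of graded modules. -/
def IsHomogeneousHom {M N : Type} [AddCommGroup M] [Module R M]
    [AddCommGroup N] [Module R N]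
    (ℳ : Γ → AddSubgroup M) (𝒩 : Γ → AddSubgroup N) (f : M →ₗ[R] N) : Prop :=
  ∀ i : Γ, ∀ x ∈ ℳ i, f x ∈ 𝒩 i

/-- A homogeneous homomorphism of degree `d`. -/
def IsHomogeneousOfDeg {M N : Type} [AddCommGroup M] [Module R M]
    [AddCommGroup N] [Module R N]
    (ℳ : Γ → AddSubgroup M) (𝒩 : Γ → AddSubgroup N) (d : Γ) (f : M →ₗ[R] N) : Prop :=
  ∀ i : Γ, ∀ x ∈ ℳ i, f x ∈ 𝒩 (i + d)

/-- A submodule is graded if it contains the homogeneous components of its elements. -/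
def IsGradedSubmodule {M : Type} [AddCommGroup M] [Module R M]
    (ℳ : Γ → AddSubgroup M) [DirectSum.Decomposition ℳ] (N : Submodule R M) : Prop :=
  ∀ x ∈ N, ∀ i : Γ, (DirectSum.decompose ℳ x i : M) ∈ N

/-- The induced grading on a submodule. -/
def subGrading {M : Type} [AddCommGroup M] [Module R M]
    (ℳ : Γ → AddSubgroup M) (N : Submodule R M) : Γ → AddSubgroup ↥N :=
  fun i => AddSubgroup.comap (N.subtype.toAddMonoidHom) (ℳ i)

/-- The induced grading on a quotient module. -/
def quotGrading {M : Type} [AddCommGroup M] [Module R M]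
    (ℳ : Γ → AddSubgroup M) (N : Submodule R M) : Γ → AddSubgroup (M ⧸ N) :=
  fun i => AddSubgroup.map (N.mkQ).toAddMonoidHom (ℳ i)

/-- A graded module is gr-free if it has a basis of homogeneous elements. -/
def IsGrFree {F : Type} [AddCommGroup F] [Module R F] (ℱ : Γ → AddSubgroup F) : Prop :=
  ∃ (ι : Type) (b : Module.Basis ι R F), ∀ j : ι, ∃ i : Γ, b j ∈ ℱ i

/-- Finitely generated gr-free. -/
def IsGrFreeFin {F : Type} [AddCommGroup F] [Module R F] (ℱ : Γ → AddSubgroup F) : Prop :=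
  ∃ (n : ℕ) (b : Module.Basis (Fin n) R F), ∀ j : Fin n, ∃ i : Γ, b j ∈ ℱ i

/-- Gr-projective: homogeneous lifting property against homogeneous epimorphisms. -/
def IsGrProjective (𝒜 : Γ → AddSubgroup R) {P : Type} [AddCommGroup P] [Module R P]
    (𝒬 : Γ → AddSubgroup P) : Prop :=
  ∀ (M N : Type) [AddCommGroup M] [Module R M] [AddCommGroup N] [Module R N]
    (ℳ : Γ → AddSubgroup M) (𝒩 : Γ → AddSubgroup N)
    [DirectSum.Decomposition ℳ] [DirectSum.Decomposition 𝒩],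
    SMulClosed 𝒜 ℳ → SMulClosed 𝒜 𝒩 →
    ∀ (g : M →ₗ[R] N), IsHomogeneousHom ℳ 𝒩 g → Function.Surjective g →
    ∀ (f : P →ₗ[R] N), IsHomogeneousHom 𝒬 𝒩 f →
    ∃ h : P →ₗ[R] M, IsHomogeneousHom 𝒬 ℳ h ∧ g ∘ₗ h = f

/-- Gr-injective: homogeneous extension property against homogeneous monomorphisms. -/
def IsGrInjective (𝒜 : Γ → AddSubgroup R) {E : Type} [AddCommGroup E] [Module R E]
    (ℰ : Γ → AddSubgroup E) : Prop :=
  ∀ (M N : Type) [AddCommGroup M] [Module R M] [AddCommGroup N] [Module R N]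
    (ℳ : Γ → AddSubgroup M) (𝒩 : Γ → AddSubgroup N)
    [DirectSum.Decomposition ℳ] [DirectSum.Decomposition 𝒩],
    SMulClosed 𝒜 ℳ → SMulClosed 𝒜 𝒩 →
    ∀ (g : M →ₗ[R] N), IsHomogeneousHom ℳ 𝒩 g → Function.Injective g →
    ∀ (f : M →ₗ[R] E), IsHomogeneousHom ℳ ℰ f →
    ∃ h : N →ₗ[R] E, IsHomogeneousHom 𝒩 ℰ h ∧ h ∘ₗ g = f

/-- A right nonzero divisor. -/
def IsRightNonZeroDivisor (r : R) : Prop := r ≠ 0 ∧ ∀ b : R, b * r = 0 → b = 0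

/-- Gr-divisible graded module. -/
def IsGrDivisible (𝒜 : Γ → AddSubgroup R) {M : Type} [AddCommGroup M] [Module R M]
    (ℳ : Γ → AddSubgroup M) : Prop :=
  ∀ (i j k : Γ), i + k = j → ∀ r ∈ 𝒜 i, IsRightNonZeroDivisor r →
    ∀ y ∈ ℳ j, ∃ x ∈ ℳ k, r • x = y

/-- Graded isomorphism of graded modules. -/
def GrIso {M N : Type} [AddCommGroup M] [Module R M] [AddCommGroup N] [Module R N]
    (ℳ : Γ → AddSubgroup M) (𝒩 : Γ → AddSubgroup N) : Prop :=
  ∃ e : M ≃ₗ[R] N, IsHomogeneousHom ℳ 𝒩 e.toLinearMap ∧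
    IsHomogeneousHom 𝒩 ℳ e.symm.toLinearMap

/-- Graded left hereditary ring: every homogeneous left ideal is gr-projective. -/
def GrLeftHereditary (𝒜 : Γ → AddSubgroup R) [DirectSum.Decomposition 𝒜] : Prop :=
  ∀ I : Submodule R R, IsGradedSubmodule 𝒜 I → IsGrProjective 𝒜 (subGrading 𝒜 I)

/-- Graded left semihereditary ring: every finitely generated homogeneous left ideal is
gr-projective. -/
def GrLeftSemihereditary (𝒜 : Γ → AddSubgroup R) [DirectSum.Decomposition 𝒜] : Prop :=
  ∀ I : Submodule R R, IsGradedSubmodule 𝒜 I → I.FG → IsGrProjective 𝒜 (subGrading 𝒜 I)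

/-- The natural grading on a direct limit of graded modules. -/
noncomputable def limGrading {ι : Type} [Preorder ι] [DecidableEq ι] (F : ι → Type)
    [∀ i, AddCommGroup (F i)] [∀ i, Module R (F i)]
    (ℱ : ∀ i, Γ → AddSubgroup (F i))
    (t : ∀ i j, i ≤ j → F i →ₗ[R] F j) : Γ → AddSubgroup (Module.DirectLimit F t) :=
  fun γ => ⨆ i, (ℱ i γ).map (Module.DirectLimit.of R ι F t i).toAddMonoidHom

end RingDefs

section CommDefs

variable {R : Type} [CommRing R]

/-- Gr-flat: tensoring preserves homogeneous monomorphisms of graded modules. -/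
def IsGrFlat (𝒜 : Γ → AddSubgroup R) {F : Type} [AddCommGroup F] [Module R F]
    (ℱ : Γ → AddSubgroup F) : Prop :=
  ∀ (M N : Type) [AddCommGroup M] [Module R M] [AddCommGroup N] [Module R N]
    (ℳ : Γ → AddSubgroup M) (𝒩 : Γ → AddSubgroup N)
    [DirectSum.Decomposition ℳ] [DirectSum.Decomposition 𝒩],
    SMulClosed 𝒜 ℳ → SMulClosed 𝒜 𝒩 →
    ∀ (f : M →ₗ[R] N), IsHomogeneousHom ℳ 𝒩 f → Function.Injective f →
      Function.Injective (LinearMap.rTensor F f)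

end CommDefs

end Defs

section Stmt18

variable {Γ : Type} [DecidableEq Γ] [AddCancelMonoid Γ] {R : Type} [CommRing R]

/-- Graded left coherent: every finitely generated graded left ideal is finitely
presented. -/
def GrLeftCoherent (𝒜 : Γ → AddSubgroup R) [DirectSum.Decomposition 𝒜] : Prop :=
  ∀ I : Submodule R R, IsGradedSubmodule 𝒜 I → I.FG → Module.FinitePresentation R ↥I

end Stmt18

open DirectSum SetLike

section Decompositions

variable {Γ : Type} [DecidableEq Γ]

def decomposeProj {M : Type} [AddCommGroup M] (ℳ : Γ → AddSubgroup M) [Decomposition ℳ]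
    (γ : Γ) : M →+ M :=
  (ℳ γ).subtype.comp ((DFinsupp.evalAddMonoidHom γ).comp (decomposeAddEquiv ℳ).toAddMonoidHom)

theorem decomposeProj_apply {M : Type} [AddCommGroup M] (ℳ : Γ → AddSubgroup M)
    [Decomposition ℳ] (γ : Γ) (m : M) : decomposeProj ℳ γ m = decompose ℳ m γ := rfl

theorem sum_decompose_of_support_subset {M : Type} [AddCommGroup M] (ℳ : Γ → AddSubgroup M)
    [Decomposition ℳ] [∀ (i) (x : ℳ i), Decidable (x ≠ 0)] {m : M} {T : Finset Γ}
    (hT : DFinsupp.support (decompose ℳ m) ⊆ T) : ∑ γ ∈ T, (decompose ℳ m γ : M) = m := by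
  rw [← Finset.sum_subset hT fun γ _ hγ => by simp [DFinsupp.notMem_support_iff.mp hγ]]
  exact sum_support_decompose ℳ m

theorem isInternal_of_proj {N : Type} [AddCommGroup N] (𝒩 : Γ → AddSubgroup N)
    (p : Γ → N →+ N) (mem : ∀ γ x, p γ x ∈ 𝒩 γ)
    (of_mem : ∀ {γ γ' x}, x ∈ 𝒩 γ' → p γ x = if γ' = γ then x else 0)
    (exists_sum : ∀ x, ∃ T : Finset Γ, ∑ γ ∈ T, p γ x = x) : IsInternal 𝒩 := by
  have proj_coe (γ : Γ) (w : ⨁ γ, 𝒩 γ) : p γ (DirectSum.coeAddMonoidHom 𝒩 w) = w γ := by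
    induction w using DirectSum.induction_on with
    | zero => simp
    | of γ' x =>
        rw [coeAddMonoidHom_of, of_mem x.2, coe_of_apply]
        split_ifs <;> rfl
    | add w w' h h' => simp [h, h']
  refine ⟨fun w w' hw => DFinsupp.ext fun γ => Subtype.ext ?_, fun x => ?_⟩
  · rw [← proj_coe, ← proj_coe, hw]
  · obtain ⟨T, hT⟩ := exists_sum x
    exact ⟨∑ γ ∈ T, of (fun γ => 𝒩 γ) γ ⟨p γ x, mem γ x⟩, by simp [coeAddMonoidHom_of, hT]⟩

variable {R : Type} [Ring R] {P M N : Type} [AddCommGroup P] [Module R P]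
  [AddCommGroup M] [Module R M] [AddCommGroup N] [Module R N]
  {𝒬 : Γ → AddSubgroup P} [Decomposition 𝒬] {ℳ : Γ → AddSubgroup M} [Decomposition ℳ]
  {𝒩 : Γ → AddSubgroup N} [Decomposition 𝒩]

theorem isGradedSubmodule_iff (L : Submodule R M) : IsGradedSubmodule ℳ L ↔ L.IsHomogeneous ℳ :=
  ⟨fun h i _ hx => h _ hx i, fun h _ hx i => h i hx⟩

theorem isInternal_subGrading {L : Submodule R M} (hL : L.IsHomogeneous ℳ) :
    IsInternal (subGrading ℳ L) := by
  classical
  refine isInternal_of_proj _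
    (fun γ => ((decomposeProj ℳ γ).comp L.subtype.toAddMonoidHom).codRestrict L.toAddSubgroup
      fun x => hL γ x.2)
    (fun γ x => (decompose ℳ (x : M) γ).2) (fun {γ γ' x} hx => Subtype.ext ?_)
    (fun x => ⟨DFinsupp.support (decompose ℳ (x : M)), Subtype.ext <| by
      rw [AddSubmonoidClass.coe_finsetSum]
      exact sum_support_decompose ℳ (x : M)⟩)
  change (decompose ℳ (x : M) γ : M) = ((if γ' = γ then x else 0 : L) : M)
  rw [decompose_of_mem ℳ (show (x : M) ∈ ℳ γ' from hx), coe_of_apply]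
  split_ifs <;> rfl

noncomputable abbrev decompositionSubGrading {L : Submodule R M} (hL : L.IsHomogeneous ℳ) :
    Decomposition (subGrading ℳ L) :=
  (isInternal_subGrading hL).chooseDecomposition

theorem IsHomogeneousHom.map_decompose {g : M →ₗ[R] N} (hg : IsHomogeneousHom ℳ 𝒩 g)
    (m : M) (γ : Γ) : g (decompose ℳ m γ) = decompose 𝒩 (g m) γ := by
  induction m using Decomposition.inductionOn ℳ with
  | zero => simp
  | add m m' h h' =>
      simp only [decompose_add, DirectSum.add_apply, AddMemClass.coe_add, map_add, h, h']
  | homogeneous m =>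
      rw [decompose_of_mem ℳ m.2, decompose_of_mem 𝒩 (hg _ _ m.2), coe_of_apply, coe_of_apply]
      split_ifs <;> simp

variable (𝒬 ℳ) in
/-- The degree-preserving part `x ↦ ∑ γ, (f x_γ)_γ` of an additive map of graded modules. -/
noncomputable def degreeZeroPartAddHom (f : P →+ M) : P →+ M :=
  (toAddMonoid fun γ => (decomposeProj ℳ γ).comp (f.comp (𝒬 γ).subtype)).comp
    (decomposeAddEquiv 𝒬).toAddMonoidHom

theorem degreeZeroPartAddHom_apply_of_mem (f : P →+ M) {x : P} {γ : Γ} (hx : x ∈ 𝒬 γ) :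
    degreeZeroPartAddHom 𝒬 ℳ f x = decompose ℳ (f x) γ := by
  rw [degreeZeroPartAddHom, AddMonoidHom.comp_apply, AddEquiv.coe_toAddMonoidHom,
    decomposeAddEquiv_apply, decompose_of_mem 𝒬 hx, toAddMonoid_of]
  rfl

end Decompositions

section GradedRingOfMulClosed

variable {Γ : Type} [DecidableEq Γ] [AddCancelMonoid Γ] {R : Type} [Ring R]

theorem one_mem_zero_of_mulClosed (𝒜 : Γ → AddSubgroup R) [Decomposition 𝒜]
    (hmul : MulClosed 𝒜) : (1 : R) ∈ 𝒜 0 := by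
  classical
  set e : R := (decompose 𝒜 (1 : R) 0 : R)
  -- Reading `a = a * ∑ γ, 1_γ` in degree `α` gives `a = a * e`, since `α + γ = α` forces `γ = 0`.
  have mul_e_of_mem {α : Γ} {a : R} (ha : a ∈ 𝒜 α) : a * e = a := by
    have key := congrArg (fun x => (decompose 𝒜 x α : R))
      (congrArg (a * ·) (sum_support_decompose 𝒜 (1 : R)))
    rw [mul_one, Finset.mul_sum, decompose_sum, DFinsupp.finsetSum_apply,
      AddSubmonoidClass.coe_finsetSum, decompose_of_mem_same 𝒜 ha] at key
    refine Eq.trans ?_ key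
    rw [Finset.sum_eq_single (0 : Γ)]
    · exact (decompose_of_mem_same 𝒜 (by simpa using hmul ha (decompose 𝒜 (1 : R) 0).2)).symm
    · intro γ _ hγ
      exact decompose_of_mem_ne 𝒜 (hmul ha (decompose 𝒜 (1 : R) γ).2)
        fun h => hγ (add_left_cancel (h.trans (add_zero α).symm))
    · intro h0
      rw [DFinsupp.notMem_support_iff.mp h0, ZeroMemClass.coe_zero, mul_zero,
        decompose_zero, DirectSum.zero_apply, ZeroMemClass.coe_zero]
  have mul_e (a : R) : a * e = a := by
    induction a using Decomposition.inductionOn 𝒜 with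
    | zero => exact zero_mul e
    | homogeneous a => exact mul_e_of_mem a.2
    | add a a' h h' => rw [add_mul, h, h']
  have he : e = 1 := by simpa using mul_e 1
  exact he ▸ (decompose 𝒜 (1 : R) 0).2

abbrev MulClosed.gradedRing {𝒜 : Γ → AddSubgroup R} [Decomposition 𝒜] (hmul : MulClosed 𝒜) :
    GradedRing 𝒜 where
  one_mem := one_mem_zero_of_mulClosed 𝒜 hmul
  mul_mem _ _ _ _ ha hb := hmul ha hb

theorem smulClosed_self (𝒜 : Γ → AddSubgroup R) [GradedRing 𝒜] : SMulClosed 𝒜 𝒜 :=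
  fun _ _ _ _ ha hb => GradedMul.mul_mem ha hb

end GradedRingOfMulClosed

section Shift

variable {Γ : Type} [AddCancelMonoid Γ] {R : Type} [Ring R] (𝒜 : Γ → AddSubgroup R)

/-- `shiftGrading 𝒜 ν` is the grading of the shifted module `R(-ν)`: its degree `γ` part is
`R_μ` for the unique `μ` with `μ + ν = γ`, and `0` if there is no such `μ`. -/
def shiftGrading (ν γ : Γ) : AddSubgroup R where
  carrier := {x | x = 0 ∨ ∃ μ, μ + ν = γ ∧ x ∈ 𝒜 μ}
  zero_mem' := Or.inl rfl
  add_mem' := by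
    rintro x y (rfl | ⟨μ, hμ, hx⟩) (rfl | ⟨μ', hμ', hy⟩)
    · exact Or.inl (add_zero 0)
    · simpa using Or.inr ⟨μ', hμ', hy⟩
    · simpa using Or.inr ⟨μ, hμ, hx⟩
    · obtain rfl : μ = μ' := add_right_cancel (hμ.trans hμ'.symm)
      exact Or.inr ⟨μ, hμ, add_mem hx hy⟩
  neg_mem' := by
    rintro x (rfl | ⟨μ, hμ, hx⟩)
    · exact Or.inl neg_zero
    · exact Or.inr ⟨μ, hμ, neg_mem hx⟩

/-- The grading of the graded free module `⨁ k, R(-d k)`. -/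
def piShiftGrading {ι : Type} (d : ι → Γ) (γ : Γ) : AddSubgroup (ι → R) :=
  AddSubgroup.pi Set.univ fun k => shiftGrading 𝒜 (d k) γ

variable {𝒜}

theorem mem_shiftGrading_of_mem {μ ν γ : Γ} {x : R} (h : μ + ν = γ) (hx : x ∈ 𝒜 μ) :
    x ∈ shiftGrading 𝒜 ν γ := Or.inr ⟨μ, h, hx⟩

theorem isHomogeneousElem_of_mem_shiftGrading {ν γ : Γ} {x : R}
    (hx : x ∈ shiftGrading 𝒜 ν γ) : IsHomogeneousElem 𝒜 x := by
  obtain rfl | ⟨μ, -, hx⟩ := hx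
  · exact ⟨0, zero_mem _⟩
  · exact ⟨μ, hx⟩

variable {M : Type} [AddCommGroup M] [Module R M] {ℳ : Γ → AddSubgroup M}

theorem smul_mem_of_mem_shiftGrading (hℳ : SMulClosed 𝒜 ℳ) {ν γ : Γ} {x : R} {m : M}
    (hx : x ∈ shiftGrading 𝒜 ν γ) (hm : m ∈ ℳ ν) : x • m ∈ ℳ γ := by
  obtain rfl | ⟨μ, rfl, hx⟩ := hx
  · simp
  · exact hℳ hx hm

theorem smulClosed_subGrading (hℳ : SMulClosed 𝒜 ℳ) (L : Submodule R M) :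
    SMulClosed 𝒜 (subGrading ℳ L) :=
  fun _ _ _ _ ha hm => hℳ ha hm

end Shift

section ShiftProj

variable {Γ : Type} [DecidableEq Γ] [AddCancelMonoid Γ] {R : Type} [Ring R]
  (𝒜 : Γ → AddSubgroup R) [Decomposition 𝒜]

open Classical in
noncomputable def shiftProj (ν γ : Γ) : R →+ R :=
  if h : ∃ μ, μ + ν = γ then decomposeProj 𝒜 h.choose else 0

variable {𝒜}

theorem shiftProj_add_right (μ ν : Γ) (s : R) :
    shiftProj 𝒜 ν (μ + ν) s = decompose 𝒜 s μ := by
  have h : ∃ μ', μ' + ν = μ + ν := ⟨μ, rfl⟩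
  rw [shiftProj, dif_pos h, add_right_cancel h.choose_spec, decomposeProj_apply]

theorem shiftProj_of_not_exists {ν γ : Γ} (h : ¬ ∃ μ, μ + ν = γ) : shiftProj 𝒜 ν γ = 0 :=
  dif_neg h

theorem shiftProj_mem (ν γ : Γ) (s : R) : shiftProj 𝒜 ν γ s ∈ shiftGrading 𝒜 ν γ := by
  by_cases h : ∃ μ, μ + ν = γ
  · obtain ⟨μ, rfl⟩ := h
    rw [shiftProj_add_right]
    exact mem_shiftGrading_of_mem rfl (decompose 𝒜 s μ).2
  · rw [shiftProj_of_not_exists h]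
    exact zero_mem _

theorem shiftProj_of_mem {μ : Γ} {s : R} (hs : s ∈ 𝒜 μ) (ν γ : Γ) :
    shiftProj 𝒜 ν γ s = if μ + ν = γ then s else 0 := by
  by_cases h : ∃ μ', μ' + ν = γ
  · obtain ⟨μ', rfl⟩ := h
    rw [shiftProj_add_right, decompose_of_mem 𝒜 hs, coe_of_apply]
    simp only [add_left_inj]
    split_ifs <;> rfl
  · rw [shiftProj_of_not_exists h, if_neg fun h' => h ⟨μ, h'⟩, AddMonoidHom.zero_apply]

theorem shiftProj_of_mem_shiftGrading {ν γ γ' : Γ} {x : R} (hx : x ∈ shiftGrading 𝒜 ν γ') :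
    shiftProj 𝒜 ν γ x = if γ' = γ then x else 0 := by
  obtain rfl | ⟨μ, rfl, hx⟩ := hx
  · simp
  · exact shiftProj_of_mem hx ν γ

theorem sum_shiftProj [∀ (i) (x : 𝒜 i), Decidable (x ≠ 0)] {ν : Γ} {s : R} {D : Finset Γ}
    (hD : (DFinsupp.support (decompose 𝒜 s)).image (· + ν) ⊆ D) :
    ∑ δ ∈ D, shiftProj 𝒜 ν δ s = s := by
  conv_lhs => rw [← sum_support_decompose 𝒜 s]
  simp only [map_sum]
  rw [Finset.sum_comm]
  conv_rhs => rw [← sum_support_decompose 𝒜 s]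
  refine Finset.sum_congr rfl fun μ hμ => ?_
  simp only [shiftProj_of_mem (decompose 𝒜 s μ).2]
  rw [Finset.sum_ite_eq, if_pos (hD (Finset.mem_image_of_mem _ hμ))]

theorem isInternal_piShiftGrading {ι : Type} [Fintype ι] (d : ι → Γ) :
    IsInternal (piShiftGrading 𝒜 d) := by
  classical
  refine isInternal_of_proj _
    (fun γ => AddMonoidHom.pi fun k => (shiftProj 𝒜 (d k) γ).comp (Pi.evalAddMonoidHom _ k))
    (fun γ v k _ => shiftProj_mem _ γ (v k)) (fun {γ γ' v} hv => funext fun k => ?_)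
    (fun v => ⟨Finset.univ.biUnion fun k => (DFinsupp.support (decompose 𝒜 (v k))).image (· + d k),
      funext fun k => ?_⟩)
  · change shiftProj 𝒜 (d k) γ (v k) = _
    rw [shiftProj_of_mem_shiftGrading (hv k trivial)]
    split_ifs <;> rfl
  · rw [Finset.sum_apply]
    exact sum_shiftProj (Finset.subset_biUnion_of_mem
      (fun k => (DFinsupp.support (decompose 𝒜 (v k))).image (· + d k)) (Finset.mem_univ k))

variable {M : Type} [AddCommGroup M] [Module R M] {ℳ : Γ → AddSubgroup M} [Decomposition ℳ]

theorem coe_decompose_smul_of_mem (hℳ : SMulClosed 𝒜 ℳ) (s : R) {ν : Γ} {m : M}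
    (hm : m ∈ ℳ ν) (γ : Γ) : (decompose ℳ (s • m) γ : M) = shiftProj 𝒜 ν γ s • m := by
  induction s using Decomposition.inductionOn 𝒜 with
  | zero => simp
  | add s s' h h' =>
      rw [add_smul, decompose_add, DirectSum.add_apply, AddMemClass.coe_add, h, h', map_add,
        add_smul]
  | homogeneous s =>
      rw [shiftProj_of_mem s.2, decompose_of_mem ℳ (hℳ s.2 hm), coe_of_apply]
      split_ifs <;> simp

theorem coe_decompose_smul [∀ (i) (x : ℳ i), Decidable (x ≠ 0)] (hℳ : SMulClosed 𝒜 ℳ)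
    (s : R) {m : M} {T : Finset Γ} (hT : DFinsupp.support (decompose ℳ m) ⊆ T) (γ : Γ) :
    (decompose ℳ (s • m) γ : M) = ∑ ν ∈ T, shiftProj 𝒜 ν γ s • (decompose ℳ m ν : M) := by
  conv_lhs => rw [← sum_decompose_of_support_subset ℳ hT]
  rw [Finset.smul_sum, decompose_sum, DFinsupp.finsetSum_apply, AddSubmonoidClass.coe_finsetSum]
  exact Finset.sum_congr rfl fun ν _ => coe_decompose_smul_of_mem hℳ s (decompose ℳ m ν).2 γ

theorem coe_decompose_smul_add (hℳ : SMulClosed 𝒜 ℳ) {a : R} {α : Γ} (ha : a ∈ 𝒜 α)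
    (m : M) (γ : Γ) : (decompose ℳ (a • m) (α + γ) : M) = a • (decompose ℳ m γ : M) := by
  classical
  rw [coe_decompose_smul hℳ a subset_rfl]
  simp only [shiftProj_of_mem ha, add_right_inj, ite_smul, zero_smul]
  rw [Finset.sum_ite_eq']
  split_ifs with h
  · rfl
  · rw [DFinsupp.notMem_support_iff.mp h, ZeroMemClass.coe_zero, smul_zero]

end ShiftProj

section ShiftGradedRing

variable {Γ : Type} [DecidableEq Γ] [AddCancelMonoid Γ] {R : Type} [Ring R]
  {𝒜 : Γ → AddSubgroup R} [GradedRing 𝒜]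

theorem mul_mem_shiftGrading {ν ν' γ : Γ} {x y : R} (hx : x ∈ shiftGrading 𝒜 ν γ)
    (hy : y ∈ shiftGrading 𝒜 ν' ν) : x * y ∈ shiftGrading 𝒜 ν' γ := by
  obtain rfl | ⟨μ, rfl, hx⟩ := hx
  · simp [zero_mem]
  obtain rfl | ⟨μ', rfl, hy⟩ := hy
  · simp [zero_mem]
  exact mem_shiftGrading_of_mem (add_assoc μ μ' ν') (GradedMul.mul_mem hx hy)

theorem one_mem_shiftGrading (γ : Γ) : (1 : R) ∈ shiftGrading 𝒜 γ γ :=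
  mem_shiftGrading_of_mem (zero_add γ) GradedOne.one_mem

theorem mul_shiftProj {γ δ : Γ} {c : R} (hc : c ∈ shiftGrading 𝒜 γ δ) (ν : Γ) (s : R) :
    c * shiftProj 𝒜 ν γ s = shiftProj 𝒜 ν δ (c * s) := by
  obtain rfl | ⟨κ, rfl, hc⟩ := hc
  · simp
  induction s using Decomposition.inductionOn 𝒜 with
  | zero => simp
  | add s s' h h' => rw [map_add, mul_add, h, h', mul_add, map_add]
  | homogeneous s =>
      simp only [shiftProj_of_mem s.2, shiftProj_of_mem (GradedMul.mul_mem hc s.2), add_assoc,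
        add_right_inj]
      split_ifs <;> simp

theorem smulClosed_piShiftGrading {ι : Type} (d : ι → Γ) :
    SMulClosed 𝒜 (piShiftGrading 𝒜 d) :=
  fun _ _ _ _ ha hv k _ => mul_mem_shiftGrading (mem_shiftGrading_of_mem rfl ha) (hv k trivial)

end ShiftGradedRing

section GrProjective

variable {Γ : Type} [DecidableEq Γ] [AddCancelMonoid Γ] {R : Type} [Ring R]
  {𝒜 : Γ → AddSubgroup R} [Decomposition 𝒜]
  {P M : Type} [AddCommGroup P] [Module R P] [AddCommGroup M] [Module R M]
  {𝒬 : Γ → AddSubgroup P} [Decomposition 𝒬] {ℳ : Γ → AddSubgroup M} [Decomposition ℳ]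

variable (𝒬 ℳ) in
noncomputable def degreeZeroPart (h𝒬 : SMulClosed 𝒜 𝒬) (hℳ : SMulClosed 𝒜 ℳ)
    (f : P →ₗ[R] M) : P →ₗ[R] M where
  __ := degreeZeroPartAddHom 𝒬 ℳ f.toAddMonoidHom
  map_smul' r x := by
    induction x using Decomposition.inductionOn 𝒬 with
    | zero => simp
    | add x x' h h' =>
        simp only [AddMonoidHom.toFun_eq_coe, smul_add, map_add] at h h' ⊢
        rw [h, h']
    | homogeneous x =>
        induction r using Decomposition.inductionOn 𝒜 with
        | zero => simp
        | add r r' h h' =>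
            simp only [AddMonoidHom.toFun_eq_coe, add_smul, map_add] at h h' ⊢
            rw [h, h']
        | homogeneous r =>
            simp only [AddMonoidHom.toFun_eq_coe, RingHom.id_apply,
              degreeZeroPartAddHom_apply_of_mem _ (h𝒬 r.2 x.2),
              degreeZeroPartAddHom_apply_of_mem _ x.2, LinearMap.toAddMonoidHom_coe, map_smul]
            exact coe_decompose_smul_add hℳ r.2 _ _

theorem degreeZeroPart_apply_of_mem (h𝒬 : SMulClosed 𝒜 𝒬) (hℳ : SMulClosed 𝒜 ℳ)
    (f : P →ₗ[R] M) {x : P} {γ : Γ} (hx : x ∈ 𝒬 γ) :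
    degreeZeroPart 𝒬 ℳ h𝒬 hℳ f x = decompose ℳ (f x) γ :=
  degreeZeroPartAddHom_apply_of_mem _ hx

theorem isGrProjective_of_projective [Module.Projective R P] (h𝒬 : SMulClosed 𝒜 𝒬) :
    IsGrProjective 𝒜 𝒬 := by
  intro M N _ _ _ _ ℳ 𝒩 _ _ hℳ _ g hg hg_surj f hf
  obtain ⟨f', hf'⟩ := Module.projective_lifting_property g f hg_surj
  refine ⟨degreeZeroPart 𝒬 ℳ h𝒬 hℳ f', fun γ x hx => ?_, LinearMap.ext fun x => ?_⟩
  · rw [degreeZeroPart_apply_of_mem h𝒬 hℳ f' hx]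
    exact (decompose ℳ _ γ).2
  induction x using Decomposition.inductionOn 𝒬 with
  | zero => simp
  | add x x' h h' => rw [map_add, map_add, h, h']
  | homogeneous x =>
      rw [LinearMap.comp_apply, degreeZeroPart_apply_of_mem h𝒬 hℳ f' x.2, hg.map_decompose,
        ← LinearMap.comp_apply, hf', decompose_of_mem_same 𝒩 (hf _ _ x.2)]

end GrProjective

section HomogeneousIdeals

variable {Γ : Type} [DecidableEq Γ] [AddCancelMonoid Γ] {R : Type} [Ring R]
  (𝒜 : Γ → AddSubgroup R) [GradedRing 𝒜]

open Classical in
noncomputable def homogeneousComponents (s : Finset R) : Finset R :=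
  s.biUnion fun x => (DFinsupp.support (decompose 𝒜 x)).image fun γ => (decompose 𝒜 x γ : R)

variable {𝒜}

theorem isHomogeneousElem_of_mem_homogeneousComponents {s : Finset R} {y : R}
    (hy : y ∈ homogeneousComponents 𝒜 s) : IsHomogeneousElem 𝒜 y := by
  classical
  simp only [homogeneousComponents, Finset.mem_biUnion, Finset.mem_image] at hy
  obtain ⟨x, -, γ, -, rfl⟩ := hy
  exact ⟨γ, (decompose 𝒜 x γ).2⟩

theorem subset_span_homogeneousComponents (s : Finset R) :
    (s : Set R) ⊆ (Ideal.span (homogeneousComponents 𝒜 s : Set R) : Set R) := by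
  classical
  intro x hx
  rw [← sum_support_decompose 𝒜 x]
  refine Ideal.sum_mem _ fun γ hγ => Ideal.subset_span ?_
  simp only [homogeneousComponents, Finset.coe_biUnion, Finset.coe_image, Set.mem_iUnion,
    Set.mem_image]
  exact ⟨x, hx, γ, hγ, rfl⟩

theorem homogeneousComponents_subset {I : Ideal R} (hI : I.IsHomogeneous 𝒜) {s : Finset R}
    (hs : (s : Set R) ⊆ I) : (homogeneousComponents 𝒜 s : Set R) ⊆ I := by
  classical
  intro y hy
  simp only [homogeneousComponents, Finset.coe_biUnion, Finset.coe_image, Set.mem_iUnion,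
    Set.mem_image] at hy
  obtain ⟨x, hx, γ, -, rfl⟩ := hy
  exact hI γ (hs hx)

theorem exists_homogeneous_generators {I : Ideal R} (hI : I.IsHomogeneous 𝒜) (hfg : I.FG) :
    ∃ s : Finset R, (∀ x ∈ s, IsHomogeneousElem 𝒜 x) ∧ Ideal.span (s : Set R) = I := by
  obtain ⟨s, rfl⟩ := hfg
  exact ⟨homogeneousComponents 𝒜 s, fun _ => isHomogeneousElem_of_mem_homogeneousComponents,
    le_antisymm (Ideal.span_le.mpr (homogeneousComponents_subset hI Submodule.subset_span))
      (Ideal.span_le.mpr (subset_span_homogeneousComponents s))⟩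

theorem exists_homogeneous_fg_between {I : Ideal R} (hI : I.IsHomogeneous 𝒜) (s : Finset R)
    (hs : (s : Set R) ⊆ I) :
    ∃ J : Ideal R, J.IsHomogeneous 𝒜 ∧ J.FG ∧ (s : Set R) ⊆ J ∧ J ≤ I :=
  ⟨_, Ideal.homogeneous_span 𝒜 _ fun _ => isHomogeneousElem_of_mem_homogeneousComponents,
    ⟨_, rfl⟩, subset_span_homogeneousComponents s,
    Ideal.span_le.mpr (homogeneousComponents_subset hI hs)⟩

theorem exists_surjective_isHomogeneousHom_piShiftGrading {I : Ideal R}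
    (hI : I.IsHomogeneous 𝒜) (hfg : I.FG) :
    ∃ (ι : Type) (_ : Fintype ι) (d : ι → Γ) (g : (ι → R) →ₗ[R] I),
      IsHomogeneousHom (piShiftGrading 𝒜 d) (subGrading 𝒜 I) g ∧ Function.Surjective g := by
  obtain ⟨s, hs_hom, hs_span⟩ := exists_homogeneous_generators hI hfg
  have hs_mem (x : s) : (x : R) ∈ I := hs_span ▸ Ideal.subset_span x.2
  choose d hd using fun x : s => hs_hom x x.2
  refine ⟨s, inferInstance, d, Fintype.linearCombination R fun x => ⟨x, hs_mem x⟩,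
    fun γ v hv => ?_, fun y => ?_⟩
  · exact sum_mem fun x _ =>
      smul_mem_of_mem_shiftGrading (smulClosed_self 𝒜) (hv x trivial) (hd x)
  · have hy : (y : R) ∈ Submodule.span R (Set.range fun x : s => (x : R)) := by
      rw [Subtype.range_coe_subtype, Finset.setOfPred_mem]
      exact hs_span ▸ y.2
    obtain ⟨c, hc⟩ := (Submodule.mem_span_range_iff_exists_fun R).mp hy
    exact ⟨c, Subtype.ext (by simpa [Fintype.linearCombination_apply] using hc)⟩

theorem projective_of_isGrProjective {I : Ideal R} (hI : I.IsHomogeneous 𝒜) (hfg : I.FG)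
    (h : IsGrProjective 𝒜 (subGrading 𝒜 I)) : Module.Projective R I := by
  obtain ⟨ι, _, d, g, hg, hg_surj⟩ := exists_surjective_isHomogeneousHom_piShiftGrading hI hfg
  let _ : Decomposition (piShiftGrading 𝒜 d) := (isInternal_piShiftGrading d).chooseDecomposition
  let _ := decompositionSubGrading hI
  obtain ⟨s, -, hgs⟩ := h _ _ _ _ (smulClosed_piShiftGrading d)
    (smulClosed_subGrading (smulClosed_self 𝒜) I) g hg hg_surj LinearMap.id fun _ _ => id
  exact Module.Projective.of_split s g hgs

end HomogeneousIdeals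

section Relations

open Matrix

variable {R M : Type} [CommRing R] [AddCommGroup M] [Module R M]

theorem sum_vecMul_smul {ι κ : Type} [Fintype ι] [Fintype κ] (c : ι → R) (b : Matrix ι κ R)
    (z : κ → M) : ∑ j, (c ᵥ* b) j • z j = ∑ q, c q • ∑ j, b q j • z j := by
  simp only [vecMul, dotProduct, Finset.sum_smul, Finset.smul_sum, mul_smul]
  exact Finset.sum_comm

theorem isTrivialRelation_of_vecMul_eq_zero {ι κ : Type} [Fintype ι] [Fintype κ] {f : ι → R}
    {x : ι → M} (a : Matrix ι κ R) (y : κ → M) (hxy : ∀ i, x i = ∑ j, a i j • y j)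
    (hfa : f ᵥ* a = 0) : Module.IsTrivialRelation f x :=
  Module.isTrivialRelation_iff_vanishesTrivially.mpr <| .of_fintype a y hxy fun j => by
    simpa [vecMul, dotProduct, mul_comm] using congrFun hfa j

theorem flat_of_forall_finset_subset_flat (L : Submodule R M)
    (h : ∀ s : Finset M, (s : Set M) ⊆ L → ∃ J ≤ L, (s : Set M) ⊆ J ∧ Module.Flat R J) :
    Module.Flat R L := by
  classical
  refine Module.Flat.of_forall_isTrivialRelation fun {l f x} hfx => ?_
  obtain ⟨J, hJL, hxJ, _⟩ :=
    h (Finset.univ.image fun i => (x i : M)) (by simp [Set.range_subset_iff])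
  have hx (i : Fin l) : (x i : M) ∈ J := hxJ (by simp)
  have hfx' : ∑ i, f i • (⟨x i, hx i⟩ : J) = 0 :=
    Submodule.inclusion_injective hJL (by simpa [← Subtype.coe_inj] using congrArg Subtype.val hfx)
  obtain ⟨k, a, y, hxy, hfa⟩ := Module.Flat.isTrivialRelation_of_sum_smul_eq_zero hfx'
  refine ⟨k, a, fun j => Submodule.inclusion hJL (y j), fun i => ?_, hfa⟩
  simpa [← Subtype.coe_inj] using congrArg Subtype.val (hxy i)

end Relations

section HomogeneousFactorization

open TensorProduct Matrix

variable {Γ : Type} [DecidableEq Γ] [AddCancelMonoid Γ] {R : Type} [CommRing R]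
  {𝒜 : Γ → AddSubgroup R} [GradedRing 𝒜]
  {M : Type} [AddCommGroup M] [Module R M] {ℳ : Γ → AddSubgroup M}

theorem vecMul_mem_shiftGrading {ι κ : Type} [Fintype ι] {γ : ι → Γ} {ζ : κ → Γ} {δ : Γ}
    {c : ι → R} (hc : ∀ q, c q ∈ shiftGrading 𝒜 (γ q) δ) {b : Matrix ι κ R}
    (hb : ∀ q j, b q j ∈ shiftGrading 𝒜 (ζ j) (γ q)) (j : κ) :
    (c ᵥ* b) j ∈ shiftGrading 𝒜 (ζ j) δ :=
  sum_mem fun q _ => mul_mem_shiftGrading (hc q) (hb q j)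

theorem vecMul_sum_eq_sum_vecMul {ι κ : Type} [Fintype ι] {f : ι → R} {T D : Finset Γ}
    [∀ (i) (x : 𝒜 i), Decidable (x ≠ 0)]
    (hD : ∀ i, ∀ ν ∈ T, (DFinsupp.support (decompose 𝒜 (f i))).image (· + ν) ⊆ D)
    (b : Matrix (ι × T) κ R) :
    f ᵥ* (fun i j => ∑ ν : T, b (i, ν) j) =
      ∑ δ ∈ D, (fun p : ι × T => shiftProj 𝒜 p.2 δ (f p.1)) ᵥ* b := by
  funext j
  simp only [vecMul, dotProduct, Finset.sum_apply, Finset.mul_sum]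
  rw [Finset.sum_comm (s := D), Fintype.sum_prod_type]
  refine Finset.sum_congr rfl fun i _ => Finset.sum_congr rfl fun ν _ => ?_
  rw [← Finset.sum_mul, sum_shiftProj (hD i ν ν.2)]

variable (𝒜 ℳ) in
/-- The entry `b q j` lies in degree "`γ q - ζ j`", so that every summand of
`x q = ∑ j, b q j • z j` is homogeneous of degree `γ q`. -/
def IsHomogeneousFactorization {ι κ : Type} [Fintype κ] (γ : ι → Γ) (x : ι → M) (ζ : κ → Γ)
    (z : κ → M) (b : Matrix ι κ R) : Prop :=
  (∀ j, z j ∈ ℳ (ζ j)) ∧ (∀ q j, b q j ∈ shiftGrading 𝒜 (ζ j) (γ q)) ∧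
    ∀ q, x q = ∑ j, b q j • z j

theorem isHomogeneousFactorization_one {ι : Type} [Fintype ι] [DecidableEq ι] {γ : ι → Γ}
    {x : ι → M} (hx : ∀ q, x q ∈ ℳ (γ q)) :
    IsHomogeneousFactorization 𝒜 ℳ γ x γ x 1 := by
  refine ⟨hx, fun q j => ?_, fun q => ?_⟩
  · rw [one_apply]
    split_ifs with h
    · exact h ▸ one_mem_shiftGrading (γ q)
    · exact zero_mem _
  · simp [one_apply]

theorem IsHomogeneousFactorization.trans {ι κ κ' : Type} [Fintype κ] [Fintype κ']
    {γ : ι → Γ} {x : ι → M} {ζ : κ → Γ} {z : κ → M} {b : Matrix ι κ R} {ζ' : κ' → Γ}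
    {z' : κ' → M} {b' : Matrix κ κ' R} (h : IsHomogeneousFactorization 𝒜 ℳ γ x ζ z b)
    (h' : IsHomogeneousFactorization 𝒜 ℳ ζ z ζ' z' b') :
    IsHomogeneousFactorization 𝒜 ℳ γ x ζ' z' (b * b') := by
  refine ⟨h'.1, fun q l => sum_mem fun j _ => mul_mem_shiftGrading (h.2.1 q j) (h'.2.1 j l),
    fun q => ?_⟩
  rw [mul_apply_eq_vecMul, sum_vecMul_smul, h.2.2 q]
  exact Finset.sum_congr rfl fun j _ => by rw [← h'.2.2 j]

variable [Decomposition ℳ]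

theorem exists_isHomogeneousFactorization_of_factorization (hℳ : SMulClosed 𝒜 ℳ)
    {ι κ : Type} [Fintype ι] [Fintype κ] {γ : ι → Γ} {x : ι → M} (hx : ∀ q, x q ∈ ℳ (γ q))
    {a : Matrix ι κ R} {y : κ → M} (hxy : ∀ q, x q = ∑ j, a q j • y j) :
    ∃ (κ' : Type) (_ : Fintype κ') (ζ : κ' → Γ) (z : κ' → M) (b : Matrix ι κ' R),
      IsHomogeneousFactorization 𝒜 ℳ γ x ζ z b ∧
      ∀ (δ : Γ) (c : ι → R), (∀ q, c q ∈ shiftGrading 𝒜 (γ q) δ) → c ᵥ* a = 0 → c ᵥ* b = 0 := by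
  classical
  -- Replace each `y j` by its homogeneous components and `a` by the matching components.
  let T : Finset Γ := Finset.univ.biUnion fun j => DFinsupp.support (decompose ℳ (y j))
  have hT (j : κ) : DFinsupp.support (decompose ℳ (y j)) ⊆ T :=
    Finset.subset_biUnion_of_mem (fun j => DFinsupp.support (decompose ℳ (y j)))
      (Finset.mem_univ j)
  refine ⟨κ × T, inferInstance, fun p => p.2, fun p => decompose ℳ (y p.1) p.2,
    fun q p => shiftProj 𝒜 p.2 (γ q) (a q p.1),
    ⟨fun p => (decompose ℳ _ _).2, fun q p => shiftProj_mem _ _ _, fun q => ?_⟩,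
    fun δ c hc hca => funext fun p => ?_⟩
  · rw [← decompose_of_mem_same ℳ (hx q), hxy q, decompose_sum, DFinsupp.finsetSum_apply,
      AddSubmonoidClass.coe_finsetSum, Fintype.sum_prod_type]
    refine Finset.sum_congr rfl fun j _ => ?_
    rw [coe_decompose_smul hℳ _ (hT j), ← Finset.sum_coe_sort T]
  · have hca_j := congrFun hca p.1
    simp only [vecMul, dotProduct, Pi.zero_apply] at hca_j ⊢
    simp only [mul_shiftProj (hc _), ← map_sum, hca_j, map_zero]

variable (hℳ : SMulClosed 𝒜 ℳ)
  (hinj : ∀ W : Ideal R, W.IsHomogeneous 𝒜 → Function.Injective (W.subtype.rTensor M))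
include hℳ hinj

theorem exists_isHomogeneousFactorization_of_relation {ι : Type} [Fintype ι] {γ : ι → Γ}
    {x : ι → M} (hx : ∀ q, x q ∈ ℳ (γ q)) {δ : Γ} {c : ι → R}
    (hc : ∀ q, c q ∈ shiftGrading 𝒜 (γ q) δ) (hcx : ∑ q, c q • x q = 0) :
    ∃ (κ : Type) (_ : Fintype κ) (ζ : κ → Γ) (z : κ → M) (b : Matrix ι κ R),
      IsHomogeneousFactorization 𝒜 ℳ γ x ζ z b ∧ c ᵥ* b = 0 := by
  have hW := Ideal.homogeneous_span 𝒜 (Set.range c) <| by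
    rintro _ ⟨q, rfl⟩
    exact isHomogeneousElem_of_mem_shiftGrading (hc q)
  have htmul : ∑ q, c q ⊗ₜ[R] x q = 0 := (TensorProduct.lid R M).injective (by simpa using hcx)
  obtain ⟨k, a, y, hxy, hca⟩ :=
    vanishesTrivially_of_sum_tmul_eq_zero_of_rTensor_injective R (hinj _ hW) htmul
  obtain ⟨κ, _, ζ, z, b, hb, hcb⟩ := exists_isHomogeneousFactorization_of_factorization hℳ hx hxy
  refine ⟨κ, _, ζ, z, b, hb, hcb δ c hc (funext fun j => ?_)⟩
  simpa [vecMul, dotProduct, mul_comm] using hca j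

theorem exists_isHomogeneousFactorization_of_relations {ι : Type} [Fintype ι] {γ : ι → Γ}
    {x : ι → M} (hx : ∀ q, x q ∈ ℳ (γ q)) (S : Finset (ι → R))
    (hS : ∀ c ∈ S, ∃ δ, ∀ q, c q ∈ shiftGrading 𝒜 (γ q) δ)
    (hSx : ∀ c ∈ S, ∑ q, c q • x q = 0) :
    ∃ (κ : Type) (_ : Fintype κ) (ζ : κ → Γ) (z : κ → M) (b : Matrix ι κ R),
      IsHomogeneousFactorization 𝒜 ℳ γ x ζ z b ∧ ∀ c ∈ S, c ᵥ* b = 0 := by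
  classical
  induction S using Finset.induction_on with
  | empty => exact ⟨ι, inferInstance, γ, x, 1, isHomogeneousFactorization_one hx, by simp⟩
  | insert c S _ ih =>
      obtain ⟨κ, _, ζ, z, b, hb, hSb⟩ := ih (fun c' hc' => hS c' (Finset.mem_insert_of_mem hc'))
        (fun c' hc' => hSx c' (Finset.mem_insert_of_mem hc'))
      obtain ⟨δ, hc⟩ := hS c (Finset.mem_insert_self c S)
      -- The relation `c` becomes a homogeneous relation `c ᵥ* b` among the `z j`; solve it there.
      have hcz : ∑ j, (c ᵥ* b) j • z j = 0 := by
        rw [sum_vecMul_smul]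
        simpa only [← hb.2.2] using hSx c (Finset.mem_insert_self c S)
      obtain ⟨κ', _, ζ', z', b', hb', hcb'⟩ :=
        exists_isHomogeneousFactorization_of_relation hℳ hinj hb.1
          (vecMul_mem_shiftGrading hc hb.2.1) hcz
      refine ⟨κ', _, ζ', z', b * b', hb.trans hb', fun c' hc' => ?_⟩
      rw [← vecMul_vecMul]
      obtain rfl | hc' := Finset.mem_insert.mp hc'
      · exact hcb'
      · rw [hSb c' hc', zero_vecMul]

omit hinj in
theorem sum_shiftProj_smul_decompose_eq_zero {ι : Type} [Fintype ι] {f : ι → R} {x : ι → M}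
    {T : Finset Γ} [∀ (i) (x : ℳ i), Decidable (x ≠ 0)]
    (hT : ∀ i, DFinsupp.support (decompose ℳ (x i)) ⊆ T) (hfx : ∑ i, f i • x i = 0) (δ : Γ) :
    ∑ p : ι × T, shiftProj 𝒜 p.2 δ (f p.1) • (decompose ℳ (x p.1) p.2 : M) = 0 := by
  have h (i : ι) : ∑ ν : T, shiftProj 𝒜 ν δ (f i) • (decompose ℳ (x i) ν : M) =
      decompose ℳ (f i • x i) δ := by
    rw [coe_decompose_smul hℳ _ (hT i), ← Finset.sum_coe_sort T]
  rw [Fintype.sum_prod_type, Finset.sum_congr rfl fun i _ => h i,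
    ← AddSubmonoidClass.coe_finsetSum, ← DFinsupp.finsetSum_apply, ← decompose_sum, hfx,
    decompose_zero, DirectSum.zero_apply, ZeroMemClass.coe_zero]

theorem flat_of_rTensor_injective_of_isHomogeneous : Module.Flat R M := by
  classical
  refine Module.Flat.of_forall_isTrivialRelation fun {l f x} hfx => ?_
  -- Split each `x i` into homogeneous components, and the relation into one relation
  -- among these components for each degree `δ ∈ D`.
  let T : Finset Γ := Finset.univ.biUnion fun i => DFinsupp.support (decompose ℳ (x i))
  have hT (i : Fin l) : DFinsupp.support (decompose ℳ (x i)) ⊆ T :=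
    Finset.subset_biUnion_of_mem (fun i => DFinsupp.support (decompose ℳ (x i)))
      (Finset.mem_univ i)
  let D : Finset Γ := Finset.univ.biUnion fun i =>
    T.biUnion fun ν => (DFinsupp.support (decompose 𝒜 (f i))).image (· + ν)
  have hD (i : Fin l) (ν : Γ) (hν : ν ∈ T) :
      (DFinsupp.support (decompose 𝒜 (f i))).image (· + ν) ⊆ D :=
    (Finset.subset_biUnion_of_mem _ hν).trans
      (Finset.subset_biUnion_of_mem (fun i => T.biUnion fun ν =>
        (DFinsupp.support (decompose 𝒜 (f i))).image (· + ν)) (Finset.mem_univ i))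
  let row (δ : Γ) (p : Fin l × T) : R := shiftProj 𝒜 p.2 δ (f p.1)
  obtain ⟨κ, _, ζ, z, b, hb, hSb⟩ := exists_isHomogeneousFactorization_of_relations hℳ hinj
    (γ := fun p : Fin l × T => (p.2 : Γ)) (x := fun p => decompose ℳ (x p.1) p.2)
    (fun p => (decompose ℳ _ _).2) (D.image row)
    (fun _ hc => by
      obtain ⟨δ, -, rfl⟩ := Finset.mem_image.mp hc
      exact ⟨δ, fun p => shiftProj_mem _ _ _⟩)
    (fun _ hc => by
      obtain ⟨δ, -, rfl⟩ := Finset.mem_image.mp hc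
      exact sum_shiftProj_smul_decompose_eq_zero hℳ hT hfx δ)
  refine isTrivialRelation_of_vecMul_eq_zero (fun i j => ∑ ν : T, b (i, ν) j) z (fun i => ?_) ?_
  · simp only [Finset.sum_smul]
    rw [Finset.sum_comm, ← sum_decompose_of_support_subset ℳ (hT i), ← Finset.sum_coe_sort T]
    exact Finset.sum_congr rfl fun ν _ => hb.2.2 (i, ν)
  · rw [vecMul_sum_eq_sum_vecMul hD]
    exact Finset.sum_eq_zero fun δ hδ => hSb _ (Finset.mem_image_of_mem _ hδ)

end HomogeneousFactorization

section GradedFlatness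

variable {Γ : Type} [DecidableEq Γ] [AddCancelMonoid Γ] {R : Type} [CommRing R]
  {𝒜 : Γ → AddSubgroup R} [GradedRing 𝒜] {F : Type} [AddCommGroup F] [Module R F]
  {ℱ : Γ → AddSubgroup F}

theorem isGrFlat_iff_flat [Decomposition ℱ] (hℱ : SMulClosed 𝒜 ℱ) :
    IsGrFlat 𝒜 ℱ ↔ Module.Flat R F := by
  constructor
  · refine fun h => flat_of_rTensor_injective_of_isHomogeneous hℱ fun W hW => ?_
    let _ := decompositionSubGrading hW
    exact h W R (subGrading 𝒜 W) 𝒜 (smulClosed_subGrading (smulClosed_self 𝒜) W)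
      (smulClosed_self 𝒜) W.subtype (fun _ _ => id) W.injective_subtype
  · intro _ M N _ _ _ _ ℳ 𝒩 _ _ _ _ f _ hf
    exact Module.Flat.rTensor_preserves_injective_linearMap f hf

theorem flat_of_forall_fg_projective
    (hproj : ∀ J : Ideal R, J.IsHomogeneous 𝒜 → J.FG → Module.Projective R J)
    {I : Ideal R} (hI : I.IsHomogeneous 𝒜) : Module.Flat R I :=
  flat_of_forall_finset_subset_flat I fun s hs => by
    obtain ⟨J, hJ, hfg, hsJ, hJI⟩ := exists_homogeneous_fg_between hI s hs
    have := hproj J hJ hfg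
    exact ⟨J, hJI, hsJ, inferInstance⟩

end GradedFlatness

section Stmt18

variable {Γ : Type} [DecidableEq Γ] [AddCancelMonoid Γ] {R : Type} [CommRing R]

/-- `R` is graded left semihereditary iff `R` is graded left coherent and
every homogeneous left ideal is gr-flat. -/
theorem graded_semihereditary_iff_coherent_flat (𝒜 : Γ → AddSubgroup R)
    [DirectSum.Decomposition 𝒜] (hmul : MulClosed 𝒜) :
    GrLeftSemihereditary 𝒜 ↔
      (GrLeftCoherent 𝒜 ∧
        ∀ I : Submodule R R, IsGradedSubmodule 𝒜 I → IsGrFlat 𝒜 (subGrading 𝒜 I)) := by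
  let _ := hmul.gradedRing
  have hsub (I : Ideal R) : SMulClosed 𝒜 (subGrading 𝒜 I) :=
    smulClosed_subGrading (smulClosed_self 𝒜) I
  simp only [GrLeftSemihereditary, GrLeftCoherent, isGradedSubmodule_iff]
  constructor
  · intro hsh
    have hproj (I : Ideal R) (hI : I.IsHomogeneous 𝒜) (hfg : I.FG) : Module.Projective R I :=
      projective_of_isGrProjective hI hfg (hsh I hI hfg)
    refine ⟨fun I hI hfg => ?_, fun I hI => ?_⟩
    · have := hproj I hI hfg
      have := Module.Finite.iff_fg.mpr hfg
      exact Module.finitePresentation_of_projective R I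
    · let _ := decompositionSubGrading hI
      exact (isGrFlat_iff_flat (hsub I)).mpr (flat_of_forall_fg_projective hproj hI)
  · rintro ⟨hcoh, hflat⟩ I hI hfg
    let _ := decompositionSubGrading hI
    have := hcoh I hI hfg
    have := (isGrFlat_iff_flat (hsub I)).mp (hflat I hI)
    have := Module.Flat.projective_of_finitePresentation (R := R) (M := I)
    exact isGrProjective_of_projective (hsub I)

end Stmt18

end GradedPaper
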